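/- arXiv:1606.02641 — 6 statements merged into one kernel-verified Lean document; each statement's English description precedes it below -/
import Mathlib

section
/- For every integer n ≥ 3, the sum over ℓ from 1 to n-3 and k from 1 to n-ℓ-2 of (2^{ℓ+1}-2)·(2^{ℓ+1}-3)·(2^{k+1}-2)·(2^{k+1}-3)·2^{3(n-ℓ-k-2)} equals (16/441)·2^{3n} - n·2^{2n} + 5·2^{2n} - (25/3)·n·2^n + (95/9)·2^n - (36/7)·n - 764/49. -/
/-!
Write `w ℓ = (2^(ℓ+1) - 2)(2^(ℓ+1) - 3) = 4·4^ℓ - 10·2^ℓ + 6` and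
`C_r(M) = ∑_{ℓ=1}^M w ℓ · r^(M-ℓ)`, a combination of sums `∑ a^ℓ r^(M-ℓ)` that are
geometric. With `M = n - 2` the inner sum is `C_8(M - ℓ)`, a combination of `8^m, 4^m, 2^m, 1`
in `m = M - ℓ` that vanishes at `m = 0`; so the double sum is the same combination of
`C_8(M), C_4(M), C_2(M), C_1(M)`, each of which is explicit.
-/

open Finset

theorem sum_Icc_pow_mul_pow_sub {K : Type*} [Field K] {a r : K} (h : a ≠ r) (M : ℕ) :
    ∑ ℓ ∈ Icc 1 M, a ^ ℓ * r ^ (M - ℓ) = a * (a ^ M - r ^ M) / (a - r) := by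
  have hne : a - r ≠ 0 := sub_ne_zero.mpr h
  induction M with
  | zero => simp
  | succ M ih =>
    have hshift : ∑ ℓ ∈ Icc 1 M, a ^ ℓ * r ^ (M + 1 - ℓ)
        = r * ∑ ℓ ∈ Icc 1 M, a ^ ℓ * r ^ (M - ℓ) := by
      rw [mul_sum]
      refine sum_congr rfl fun ℓ hℓ => ?_
      rw [Nat.sub_add_comm (mem_Icc.mp hℓ).2, pow_succ]
      ring
    rw [sum_Icc_succ_top (Nat.le_add_left 1 M), hshift, ih, Nat.sub_self, pow_zero]
    field_simp
    ring

theorem sum_Icc_pow_mul_pow_sub_self {R : Type*} [CommSemiring R] (a : R) (M : ℕ) :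
    ∑ ℓ ∈ Icc 1 M, a ^ ℓ * a ^ (M - ℓ) = M * a ^ M := by
  rw [sum_congr rfl fun ℓ hℓ => by rw [← pow_add, Nat.add_sub_cancel' (mem_Icc.mp hℓ).2],
    sum_const, Nat.card_Icc, nsmul_eq_mul, Nat.add_sub_cancel]

def weight (ℓ : ℕ) : ℚ := (2 ^ (ℓ + 1) - 2) * (2 ^ (ℓ + 1) - 3)

def weightConv (r : ℚ) (M : ℕ) : ℚ := ∑ ℓ ∈ Icc 1 M, weight ℓ * r ^ (M - ℓ)

theorem weight_eq (ℓ : ℕ) : weight ℓ = 4 * 4 ^ ℓ - 10 * 2 ^ ℓ + 6 * 1 ^ ℓ := by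
  rw [weight, show (4 : ℚ) ^ ℓ = 2 ^ ℓ * 2 ^ ℓ by rw [← mul_pow]; norm_num]
  ring

theorem weightConv_eq (r : ℚ) (M : ℕ) : weightConv r M =
    4 * ∑ ℓ ∈ Icc 1 M, 4 ^ ℓ * r ^ (M - ℓ) - 10 * ∑ ℓ ∈ Icc 1 M, 2 ^ ℓ * r ^ (M - ℓ)
      + 6 * ∑ ℓ ∈ Icc 1 M, 1 ^ ℓ * r ^ (M - ℓ) := by
  simp only [weightConv, weight_eq, mul_sum, ← sum_sub_distrib, ← sum_add_distrib]
  exact sum_congr rfl fun _ _ => by ring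

theorem weightConv_eight (M : ℕ) :
    weightConv 8 M = 32 / 21 * 8 ^ M - 4 * 4 ^ M + 10 / 3 * 2 ^ M - 6 / 7 := by
  rw [weightConv_eq, sum_Icc_pow_mul_pow_sub (by norm_num), sum_Icc_pow_mul_pow_sub (by norm_num),
    sum_Icc_pow_mul_pow_sub (by norm_num)]
  ring

theorem weightConv_four (M : ℕ) :
    weightConv 4 M = 4 * M * 4 ^ M - 8 * 4 ^ M + 10 * 2 ^ M - 2 := by
  rw [weightConv_eq, sum_Icc_pow_mul_pow_sub_self, sum_Icc_pow_mul_pow_sub (by norm_num),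
    sum_Icc_pow_mul_pow_sub (by norm_num)]
  ring

theorem weightConv_two (M : ℕ) :
    weightConv 2 M = 8 * 4 ^ M - 10 * M * 2 ^ M - 2 * 2 ^ M - 6 := by
  rw [weightConv_eq, sum_Icc_pow_mul_pow_sub (by norm_num), sum_Icc_pow_mul_pow_sub_self,
    sum_Icc_pow_mul_pow_sub (by norm_num)]
  ring

theorem weightConv_one (M : ℕ) :
    weightConv 1 M = 16 / 3 * 4 ^ M - 20 * 2 ^ M + 6 * M + 44 / 3 := by
  rw [weightConv_eq, sum_Icc_pow_mul_pow_sub (by norm_num), sum_Icc_pow_mul_pow_sub (by norm_num),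
    sum_Icc_pow_mul_pow_sub_self]
  ring

theorem sum_weight_mul_weightConv_eight (M : ℕ) :
    ∑ ℓ ∈ Icc 1 M, weight ℓ * weightConv 8 (M - ℓ) =
      32 / 21 * weightConv 8 M - 4 * weightConv 4 M + 10 / 3 * weightConv 2 M
        - 6 / 7 * weightConv 1 M := by
  have expand : ∀ ℓ ∈ Icc 1 M, weight ℓ * weightConv 8 (M - ℓ) =
      32 / 21 * (weight ℓ * 8 ^ (M - ℓ)) - 4 * (weight ℓ * 4 ^ (M - ℓ))
        + 10 / 3 * (weight ℓ * 2 ^ (M - ℓ)) - 6 / 7 * (weight ℓ * 1 ^ (M - ℓ)) :=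
    fun ℓ _ => by rw [weightConv_eight]; ring
  rw [sum_congr rfl expand]
  simp only [sum_add_distrib, sum_sub_distrib, ← mul_sum, weightConv]

theorem stmt_0 (n : ℕ) (hn : 3 ≤ n) :
    (∑ ℓ ∈ Finset.Icc 1 (n-3), ∑ k ∈ Finset.Icc 1 (n-ℓ-2),
      ((2^(ℓ+1)-2) * (2^(ℓ+1)-3) * (2^(k+1)-2) * (2^(k+1)-3) * 2^(3*(n-ℓ-k-2)) : ℚ))
    = (16/441) * 2^(3*n) - n * 2^(2*n) + 5 * 2^(2*n)
      - (25/3) * n * 2^n + (95/9) * 2^n - (36/7) * n - 764/49 := by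
  obtain ⟨M, rfl⟩ : ∃ M, n = M + 2 := ⟨n - 2, by omega⟩
  have inner : ∀ ℓ ∈ Icc 1 (M + 2 - 3), ∑ k ∈ Icc 1 (M + 2 - ℓ - 2),
      ((2^(ℓ+1)-2) * (2^(ℓ+1)-3) * (2^(k+1)-2) * (2^(k+1)-3) * 2^(3*(M+2-ℓ-k-2)) : ℚ)
        = weight ℓ * weightConv 8 (M - ℓ) := by
    intro ℓ _
    rw [weightConv, mul_sum, show M + 2 - ℓ - 2 = M - ℓ by omega]
    refine sum_congr rfl fun k _ => ?_
    rw [show 3 * (M + 2 - ℓ - k - 2) = 3 * (M - ℓ - k) by omega, pow_mul, weight, weight]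
    ring
  have extend : ∑ ℓ ∈ Icc 1 (M + 2 - 3), weight ℓ * weightConv 8 (M - ℓ)
      = ∑ ℓ ∈ Icc 1 M, weight ℓ * weightConv 8 (M - ℓ) := by
    obtain ⟨N, rfl⟩ : ∃ N, M = N + 1 := ⟨M - 1, by omega⟩
    rw [sum_Icc_succ_top (by omega), Nat.sub_self, show N + 1 + 2 - 3 = N by omega]
    simp [weightConv]
  rw [sum_congr rfl inner, extend, sum_weight_mul_weightConv_eight, weightConv_eight,
    weightConv_four, weightConv_two, weightConv_one]
  simp only [pow_mul, pow_add]
  push_cast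
  ring
end

section
/- For every integer n ≥ 3, the sum over ℓ from 1 to n-3 and k from 1 to n-ℓ-2 of (2^{ℓ+1}-2)·(2^{k+1}-2)·(2^{k+1}-3)·2^{3(n-ℓ-k-2)} equals (4/441)·2^{3n} - (1/3)·2^{2n} + (5/3)·n·2^n - (37/9)·2^n + (12/7)·n + 652/147. -/
/-!
Put `n = m + 3`. For fixed `ℓ` the inner sum over `k` is a convolution of `(2^(k+1)-2)(2^(k+1)-3)`
with powers of `8`, which has a closed form in `8^M, 4^M, 2^M, 1` with `M = m + 1 - ℓ`. The outer
sum is then a combination of convolutions of `2^(ℓ+1)-2` with powers of `8, 4, 2, 1`, each of which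
is again elementary. All closed forms follow from the one-step recursion of such convolutions.
-/

open Finset

theorem sum_Icc_mul_pow_sub_succ {R : Type*} [CommSemiring R] (u : ℕ → R) (r : R) (m : ℕ) :
    ∑ i ∈ Icc 1 (m + 1), u i * r ^ (m + 1 - i) = r * ∑ i ∈ Icc 1 m, u i * r ^ (m - i) + u (m + 1) := by
  rw [sum_Icc_succ_top (by omega), mul_sum, Nat.sub_self, pow_zero, mul_one]
  congr 1
  refine sum_congr rfl fun i hi => ?_
  rw [Nat.sub_add_comm (mem_Icc.mp hi).2, pow_succ]
  ring

theorem sum_Icc_pow_succ_sub_two_mul_pow_succ_sub_three_mul_eight_pow (M : ℕ) :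
    ∑ k ∈ Icc 1 M, ((2 ^ (k + 1) - 2) * (2 ^ (k + 1) - 3) * 8 ^ (M - k) : ℚ)
      = 32 / 21 * 8 ^ M - 4 * 4 ^ M + 10 / 3 * 2 ^ M - 6 / 7 := by
  induction M with
  | zero => norm_num
  | succ M ih =>
    rw [sum_Icc_mul_pow_sub_succ, ih]
    have h4 : ∀ j, (4 : ℚ) ^ j = 2 ^ j * 2 ^ j := fun j => by rw [← mul_pow]; norm_num
    have h8 : ∀ j, (8 : ℚ) ^ j = 2 ^ j * 2 ^ j * 2 ^ j := fun j => by rw [← mul_pow, ← mul_pow]; norm_num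
    rw [h4, h4, h8, h8]
    ring

section OuterSums

variable (m : ℕ)

theorem sum_Icc_pow_succ_sub_two_mul_eight_pow :
    ∑ ℓ ∈ Icc 1 m, ((2 ^ (ℓ + 1) - 2) * 8 ^ (m - ℓ) : ℚ) = 8 / 21 * 8 ^ m - 2 / 3 * 2 ^ m + 2 / 7 := by
  induction m with
  | zero => norm_num
  | succ m ih => rw [sum_Icc_mul_pow_sub_succ, ih]; ring

theorem sum_Icc_pow_succ_sub_two_mul_four_pow :
    ∑ ℓ ∈ Icc 1 m, ((2 ^ (ℓ + 1) - 2) * 4 ^ (m - ℓ) : ℚ) = 4 / 3 * 4 ^ m - 2 * 2 ^ m + 2 / 3 := by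
  induction m with
  | zero => norm_num
  | succ m ih => rw [sum_Icc_mul_pow_sub_succ, ih]; ring

theorem sum_Icc_pow_succ_sub_two_mul_two_pow :
    ∑ ℓ ∈ Icc 1 m, ((2 ^ (ℓ + 1) - 2) * 2 ^ (m - ℓ) : ℚ) = 2 * m * 2 ^ m - 2 * 2 ^ m + 2 := by
  induction m with
  | zero => norm_num
  | succ m ih => rw [sum_Icc_mul_pow_sub_succ, ih]; push_cast; ring

theorem sum_Icc_pow_succ_sub_two :
    ∑ ℓ ∈ Icc 1 m, (2 ^ (ℓ + 1) - 2 : ℚ) = 4 * 2 ^ m - 4 - 2 * m := by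
  induction m with
  | zero => norm_num
  | succ m ih => rw [sum_Icc_succ_top (by omega), ih]; push_cast; ring

end OuterSums

theorem stmt_4 (n : ℕ) (hn : 3 ≤ n) :
    (∑ ℓ ∈ Finset.Icc 1 (n-3), ∑ k ∈ Finset.Icc 1 (n-ℓ-2),
      ((2^(ℓ+1)-2) * (2^(k+1)-2) * (2^(k+1)-3) * 2^(3*(n-ℓ-k-2)) : ℚ))
    = (4/441) * 2^(3*n) - (1/3) * 2^(2*n) + (5/3) * n * 2^n - (37/9) * 2^n
      + (12/7) * n + 652/147 := by
  obtain ⟨m, rfl⟩ : ∃ m, n = m + 3 := ⟨n - 3, by omega⟩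
  have inner : ∀ ℓ ∈ Icc 1 m,
      ∑ k ∈ Icc 1 (m + 3 - ℓ - 2),
        ((2^(ℓ+1)-2) * (2^(k+1)-2) * (2^(k+1)-3) * 2^(3*(m+3-ℓ-k-2)) : ℚ)
      = 256 / 21 * ((2 ^ (ℓ + 1) - 2) * 8 ^ (m - ℓ)) + (-16) * ((2 ^ (ℓ + 1) - 2) * 4 ^ (m - ℓ))
        + 20 / 3 * ((2 ^ (ℓ + 1) - 2) * 2 ^ (m - ℓ)) + (-6 / 7) * (2 ^ (ℓ + 1) - 2) := by
    intro ℓ hℓ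
    have hM : m + 3 - ℓ - 2 = (m - ℓ) + 1 := by grind
    calc _ = (2 ^ (ℓ + 1) - 2) * ∑ k ∈ Icc 1 ((m - ℓ) + 1),
            ((2 ^ (k + 1) - 2) * (2 ^ (k + 1) - 3) * 8 ^ ((m - ℓ) + 1 - k) : ℚ) := by
          rw [hM, mul_sum]
          refine sum_congr rfl fun k _ => ?_
          rw [show 3 * (m + 3 - ℓ - k - 2) = 3 * ((m - ℓ) + 1 - k) by omega, pow_mul]
          norm_num
          ring
      _ = _ := by rw [sum_Icc_pow_succ_sub_two_mul_pow_succ_sub_three_mul_eight_pow]; ring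
  rw [show m + 3 - 3 = m by omega, sum_congr rfl inner]
  simp only [sum_add_distrib, ← mul_sum]
  rw [sum_Icc_pow_succ_sub_two_mul_eight_pow, sum_Icc_pow_succ_sub_two_mul_four_pow,
    sum_Icc_pow_succ_sub_two_mul_two_pow, sum_Icc_pow_succ_sub_two, pow_mul, pow_mul]
  norm_num
  ring
end

section
/- For every natural number n ≥ 1, the quantity (1/3)·2^{4n} - 6·2^{3n} + 20·n·2^{2n} - (127/3)·2^{2n} + 18·n·2^n + 48·2^n is a nonnegative integer divisible by 24. -/
/-!
Clearing the denominator, the quantity is `N n / 3` with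
`N n = 2^(4n) - 18·2^(3n) + (60n - 127)·2^(2n) + (54n + 144)·2^n`, and it suffices to show
`0 ≤ N n` and `72 ∣ N n`. Every term of `N n` carries a factor `2^n`, which gives `8 ∣ N n`
once `n ≥ 3` (and `N 0 = N 1 = N 2 = 0`). Modulo `9` only `2^(2n)·(4^n + 6n - 1)` survives,
and `9 ∣ 4^n + 6n - 1` by the usual induction. Nonnegativity comes from `2^n ≥ 18` for `n ≥ 5`.
-/

namespace QuartetAgreement

def tripledCount (n : ℕ) : ℤ :=
  2 ^ (4 * n) - 18 * 2 ^ (3 * n) + (60 * n - 127) * 2 ^ (2 * n) + (54 * n + 144) * 2 ^ n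

theorem nine_dvd_four_pow_add_six_mul_sub_one (n : ℕ) : (9 : ℤ) ∣ 4 ^ n + 6 * n - 1 := by
  induction n with
  | zero => norm_num
  | succ k ih =>
    have step : (4 : ℤ) ^ (k + 1) + 6 * ↑(k + 1) - 1 = 4 * (4 ^ k + 6 * k - 1) + 9 * (1 - 2 * k) := by
      push_cast; ring
    rw [step]
    exact dvd_add (dvd_mul_of_dvd_right ih 4) (dvd_mul_right 9 _)

theorem nine_dvd_tripledCount (n : ℕ) : (9 : ℤ) ∣ tripledCount n := by
  have split : tripledCount n = 2 ^ (2 * n) * (4 ^ n + 6 * n - 1)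
      + 9 * (-2 * 2 ^ (3 * n) + (6 * n - 14) * 2 ^ (2 * n) + (6 * n + 16) * 2 ^ n) := by
    rw [show (4 : ℤ) ^ n = 2 ^ (2 * n) by rw [pow_mul]; norm_num, tripledCount]
    ring
  rw [split]
  exact dvd_add (dvd_mul_of_dvd_right (nine_dvd_four_pow_add_six_mul_sub_one n) _)
    (dvd_mul_right 9 _)

theorem eight_dvd_tripledCount (n : ℕ) : (8 : ℤ) ∣ tripledCount n := by
  rcases lt_or_ge n 3 with hn | hn
  · interval_cases n <;> decide
  · have split : tripledCount n = 2 ^ n *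
        (2 ^ (3 * n) - 18 * 2 ^ (2 * n) + (60 * n - 127) * 2 ^ n + (54 * n + 144)) := by
      rw [tripledCount]; ring
    rw [split]
    exact dvd_mul_of_dvd_left (by simpa using pow_dvd_pow (2 : ℤ) hn) _

theorem tripledCount_nonneg (n : ℕ) : 0 ≤ tripledCount n := by
  rcases lt_or_ge n 5 with hn | hn
  · interval_cases n <;> decide
  · have hx : (18 : ℤ) ≤ 2 ^ n :=
      le_trans (by norm_num) (pow_le_pow_right₀ (by norm_num : (1 : ℤ) ≤ 2) hn)
    have hn' : (5 : ℤ) ≤ n := by exact_mod_cast hn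
    have split : tripledCount n = 2 ^ (3 * n) * (2 ^ n - 18)
        + (60 * n - 127) * 2 ^ (2 * n) + (54 * n + 144) * 2 ^ n := by
      rw [tripledCount]; ring
    rw [split]
    have := mul_nonneg (pow_nonneg zero_le_two (3 * n)) (sub_nonneg.mpr hx)
    have := mul_nonneg (by linarith : (0 : ℤ) ≤ 60 * n - 127) (pow_nonneg zero_le_two (2 * n))
    have := mul_nonneg (by linarith : (0 : ℤ) ≤ 54 * n + 144) (pow_nonneg zero_le_two n)
    linarith

theorem exists_tripledCount_eq_seventy_two_mul (n : ℕ) : ∃ k : ℕ, tripledCount n = 72 * k := by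
  obtain ⟨k, hk⟩ := (show IsCoprime (8 : ℤ) 9 from ⟨-1, 1, by norm_num⟩).mul_dvd
    (eight_dvd_tripledCount n) (nine_dvd_tripledCount n)
  lift k to ℕ using by linarith [tripledCount_nonneg n]
  exact ⟨k, by rw [hk]; norm_num⟩

end QuartetAgreement

open QuartetAgreement in
theorem stmt_8_general (n : ℕ) :
    ∃ m : ℕ, 24 ∣ m ∧
      ((1/3) * 2^(4*n) - 6 * 2^(3*n) + 20 * n * 2^(2*n) - (127/3) * 2^(2*n)
        + 18 * n * 2^n + 48 * 2^n : ℚ) = m := by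
  obtain ⟨k, hk⟩ := exists_tripledCount_eq_seventy_two_mul n
  refine ⟨24 * k, dvd_mul_right 24 k, ?_⟩
  have hq : (tripledCount n : ℚ) = 72 * k := by exact_mod_cast hk
  rw [tripledCount] at hq
  push_cast at hq ⊢
  linarith

theorem stmt_8 (n : ℕ) (hn : 1 ≤ n) :
    ∃ m : ℕ, 24 ∣ m ∧
      ((1/3) * 2^(4*n) - 6 * 2^(3*n) + 20 * n * 2^(2*n) - (127/3) * 2^(2*n)
        + 18 * n * 2^n + 48 * 2^n : ℚ) = m :=
  stmt_8_general n
end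

section
/- Define R(n) = ((2/3)·2^{4n} - 20·n·2^{2n} + (160/3)·2^{2n} - 18·n·2^n - 54·2^n) / (2^{4n} - 6·2^{3n} + 11·2^{2n} - 6·2^n) for real n ≥ 3. Then R(n) > 2/3 for every integer n ≥ 3. -/
/-!
Put `x = 2^n`. The denominator is `x (x - 1) (x - 2) (x - 3) > 0`, and the numerator minus
`2/3` of it is `x (4x² + 46x - 20nx - 18n - 50)`. This is positive as soon as `5n ≤ x + 7`,
which holds for `2^n` from `n = 3` on.
-/

lemma five_mul_le_two_pow_add_seven {n : ℕ} (hn : 3 ≤ n) : 5 * n ≤ 2 ^ n + 7 := by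
  induction n, hn using Nat.le_induction with
  | base => norm_num
  | succ n hn ih => rw [pow_succ]; omega

lemma two_thirds_lt_quartet_ratio {x m : ℝ} (hm : 3 ≤ m) (hx : 5 * m ≤ x + 7) :
    2 / 3 < ((2/3) * x^4 - 20 * m * x^2 + (160/3) * x^2 - 18 * m * x - 54 * x) /
      (x^4 - 6 * x^3 + 11 * x^2 - 6 * x) := by
  have hx_pos : 0 < x := by linarith
  have hden : 0 < x^4 - 6 * x^3 + 11 * x^2 - 6 * x := by
    have hfac : x^4 - 6 * x^3 + 11 * x^2 - 6 * x = x * ((x - 1) * ((x - 2) * (x - 3))) := by ring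
    rw [hfac]
    exact mul_pos hx_pos (mul_pos (by linarith) (mul_pos (by linarith) (by linarith)))
  have hexcess : 0 < 4 * x^2 + 46 * x - 20 * m * x - 18 * m - 50 := by
    nlinarith [mul_nonneg hx_pos.le (sub_nonneg.mpr hx)]
  rw [lt_div_iff₀ hden]
  nlinarith [mul_pos hx_pos hexcess]

theorem stmt_10 (n : ℕ) (hn : 3 ≤ n) :
    ((2/3) * 2^(4*n) - 20 * n * 2^(2*n) + (160/3) * 2^(2*n) - 18 * n * 2^n - 54 * 2^n) /
      (2^(4*n) - 6 * 2^(3*n) + 11 * 2^(2*n) - 6 * 2^n) > (2/3 : ℝ) := by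
  have hpow (k : ℕ) : (2 : ℝ) ^ (k * n) = (2 ^ n) ^ k := by rw [← pow_mul, mul_comm]
  rw [hpow 4, hpow 3, hpow 2]
  refine two_thirds_lt_quartet_ratio (x := 2 ^ n) (m := n) (by exact_mod_cast hn) ?_
  exact_mod_cast five_mul_le_two_pow_add_seven hn
end

section
/- Define R(n) = ((2/3)·2^{4n} - 20·n·2^{2n} + (160/3)·2^{2n} - 18·n·2^n - 54·2^n) / (2^{4n} - 6·2^{3n} + 11·2^{2n} - 6·2^n). Then R(n) > R(n+1) for every integer n ≥ 3, i.e., R is strictly decreasing on integers n ≥ 3. -/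
/-!
With `x = 2^n` we have `R n = N(x, n) / D(x)` and `R (n+1) = N(2x, n+1) / D(2x)`, where
`N = quartetNum`, `D = quartetDen`, and `D(x) = x(x-1)(x-2)(x-3) > 0`. After cross-multiplying,
the difference `N(x, y) D(2x) - N(2x, y+1) D(x)` becomes, in the variables `u = x - 8` and
`w = x + 16 - 8y`, a polynomial with positive coefficients. Both variables are nonnegative for
`x = 2^n`, `y = n`, `n ≥ 3`, because `8n ≤ 2^n + 16` for every `n` (with equality at `n = 3, 4`).
-/

noncomputable def quartetNum (x y : ℝ) : ℝ :=
  (2/3) * x^4 - 20 * y * x^2 + (160/3) * x^2 - 18 * y * x - 54 * x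

noncomputable def quartetDen (x : ℝ) : ℝ :=
  x^4 - 6 * x^3 + 11 * x^2 - 6 * x

lemma quartetDen_eq (x : ℝ) : quartetDen x = x * (x - 1) * (x - 2) * (x - 3) := by
  unfold quartetDen; ring

lemma quartetDen_pos {x : ℝ} (hx : 3 < x) : 0 < quartetDen x := by
  rw [quartetDen_eq]
  have : 0 < x - 3 := by linarith
  have : 0 < x - 2 := by linarith
  have : 0 < x - 1 := by linarith
  positivity

noncomputable def quartetGap (u w : ℝ) : ℝ :=
  8709120 + 13278720 * w + 15951104 * u + 10327872 * u * w + 8454864 * u^2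
    + 3336168 * u^2 * w + 2095680 * u^3 + 572895 * u^3 * w + 274929 * u^4
    + 55158 * u^4 * w + 18930 * u^5 + 2823 * u^5 * w + 585 * u^6 + 60 * u^6 * w + 4 * u^7

lemma quartetGap_pos {u w : ℝ} (hu : 0 ≤ u) (hw : 0 ≤ w) : 0 < quartetGap u w := by
  unfold quartetGap; positivity

lemma two_mul_cross_sub_eq_quartetGap (x y : ℝ) :
    2 * (quartetNum x y * quartetDen (2 * x) - quartetNum (2 * x) (y + 1) * quartetDen x) =
      quartetGap (x - 8) (x + 16 - 8 * y) := by
  unfold quartetNum quartetDen quartetGap; ring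

lemma quartet_ratio_two_mul_lt {x y : ℝ} (hx : 8 ≤ x) (hxy : 8 * y ≤ x + 16) :
    quartetNum (2 * x) (y + 1) / quartetDen (2 * x) < quartetNum x y / quartetDen x := by
  rw [div_lt_div_iff₀ (quartetDen_pos (by linarith)) (quartetDen_pos (by linarith))]
  have hgap := two_mul_cross_sub_eq_quartetGap x y
  have := quartetGap_pos (u := x - 8) (w := x + 16 - 8 * y) (by linarith) (by linarith)
  linarith

lemma eight_mul_le_two_pow_add_sixteen (n : ℕ) : 8 * n ≤ 2^n + 16 := by
  induction n with
  | zero => norm_num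
  | succ m ih =>
    rcases Nat.lt_or_ge m 3 with hm | hm
    · interval_cases m <;> norm_num
    · have : 2^3 ≤ 2^m := Nat.pow_le_pow_right (by norm_num) hm
      rw [pow_succ]
      omega

theorem stmt_12 (n : ℕ) (hn : 3 ≤ n) :
    let R : ℕ → ℝ := fun m =>
      ((2/3) * 2^(4*m) - 20 * m * 2^(2*m) + (160/3) * 2^(2*m) - 18 * m * 2^m - 54 * 2^m) /
        (2^(4*m) - 6 * 2^(3*m) + 11 * 2^(2*m) - 6 * 2^m)
    R n > R (n+1) := by
  intro R
  have hR : ∀ m : ℕ, R m = quartetNum (2^m) m / quartetDen (2^m) := by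
    intro m
    simp only [R, quartetNum, quartetDen, pow_mul']
  have hx : (8 : ℝ) ≤ 2^n := by
    calc (8 : ℝ) = 2^3 := by norm_num
      _ ≤ 2^n := pow_le_pow_right₀ one_le_two hn
  have hxy : 8 * (n : ℝ) ≤ 2^n + 16 := by exact_mod_cast eight_mul_le_two_pow_add_sixteen n
  rw [gt_iff_lt, hR, hR, pow_succ', Nat.cast_succ]
  exact quartet_ratio_two_mul_lt hx hxy
end

section
/- Let x₀, x₁, x₂, x₃ be pairwise distinct binary strings of length n. Among the three pairings {{0,1},{2,3}}, {{0,2},{1,3}}, {{0,3},{1,2}}, at most one pairing {i,j},{k,l} can satisfy: the longest common prefix of x_i and x_j or of x_k and x_l strictly exceeds the longest common prefixes of all pairs crossing the pairing. In other words, the events A = (P_{0,1} ∪ P_{2,3}), B = (P_{0,2} ∪ P_{1,3}), C = (P_{0,3} ∪ P_{1,2}) (where P_{i,j} means the pair (i,j) attains the strictly largest common prefix length among the six pairs) are mutually exclusive. -/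
/-- Length of the longest common prefix of two binary strings of length `n`. -/
def lcp {n : ℕ} (x y : Fin n → Bool) : ℕ :=
  ((Finset.range (n+1)).filter (fun m => ∀ i : Fin n, (i : ℕ) < m → x i = y i)).sup id

theorem lcp_comm {n : ℕ} (x y : Fin n → Bool) : lcp x y = lcp y x := by
  simp only [lcp, @eq_comm _ (x _)]

theorem stmt_19_general (n : ℕ) (x0 x1 x2 x3 : Fin n → Bool) :
    -- `P a b c d` : the pair (a,b) attains the strictly largest common prefix
    -- length among the six pairs of {a,b,c,d}
    let P : (Fin n → Bool) → (Fin n → Bool) → (Fin n → Bool) → (Fin n → Bool) → Prop :=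
      fun a b c d => lcp a b > lcp a c ∧ lcp a b > lcp a d ∧ lcp a b > lcp b c ∧
        lcp a b > lcp b d ∧ lcp a b > lcp c d
    let A := P x0 x1 x2 x3 ∨ P x2 x3 x0 x1
    let B := P x0 x2 x1 x3 ∨ P x1 x3 x0 x2
    let C := P x0 x3 x1 x2 ∨ P x1 x2 x0 x3
    ¬(A ∧ B) ∧ ¬(A ∧ C) ∧ ¬(B ∧ C) := by
  intro P A B C
  have e01 := lcp_comm x0 x1
  have e02 := lcp_comm x0 x2
  have e03 := lcp_comm x0 x3
  have e12 := lcp_comm x1 x2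
  have e13 := lcp_comm x1 x3
  have e23 := lcp_comm x2 x3
  -- Two events from different pairings name two different pairs as the strict maximum
  -- of the same six (symmetric) values.
  refine ⟨?_, ?_, ?_⟩ <;>
    rintro ⟨(⟨_, _, _, _, _⟩ | ⟨_, _, _, _, _⟩), (⟨_, _, _, _, _⟩ | ⟨_, _, _, _, _⟩)⟩ <;>
    omega

theorem stmt_19 (n : ℕ) (x0 x1 x2 x3 : Fin n → Bool)
    (h01 : x0 ≠ x1) (h02 : x0 ≠ x2) (h03 : x0 ≠ x3)
    (h12 : x1 ≠ x2) (h13 : x1 ≠ x3) (h23 : x2 ≠ x3) :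
    -- `P a b c d` : the pair (a,b) attains the strictly largest common prefix
    -- length among the six pairs of {a,b,c,d}
    let P : (Fin n → Bool) → (Fin n → Bool) → (Fin n → Bool) → (Fin n → Bool) → Prop :=
      fun a b c d => lcp a b > lcp a c ∧ lcp a b > lcp a d ∧ lcp a b > lcp b c ∧
        lcp a b > lcp b d ∧ lcp a b > lcp c d
    let A := P x0 x1 x2 x3 ∨ P x2 x3 x0 x1
    let B := P x0 x2 x1 x3 ∨ P x1 x3 x0 x2
    let C := P x0 x3 x1 x2 ∨ P x1 x2 x0 x3
    ¬(A ∧ B) ∧ ¬(A ∧ C) ∧ ¬(B ∧ C) :=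
  stmt_19_general n x0 x1 x2 x3
end
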